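/- For any n×n real matrix A, any n×n orthogonal matrix V, and any symmetric matrices H_1 and H_2, the following equality holds: ( V (Diag^{(12)} A) Vᵀ )[H_1, H_2] = ⟨ V ( A ∘ (Vᵀ H_1 V) ) Vᵀ , H_2 ⟩, where ∘ stands for the ordinary (entrywise) Hadamard product of matrices and ⟨X,Y⟩ = tr(XYᵀ). -/

import Mathlib

open Matrix

noncomputable section

/-- The space of `n × n` real matrices. -/
abbrev Mat (n : ℕ) := Matrix (Fin n) (Fin n) ℝ

/-- A `k`-tensor on `ℝ^n`. -/
abbrev Tens (k n : ℕ) := (Fin k → Fin n) → ℝ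

/-- A `2k`-tensor on `ℝ^n`, indices grouped into `k` upper and `k` lower ones. -/
abbrev Tens2 (k n : ℕ) := (Fin k → Fin n) → (Fin k → Fin n) → ℝ

/-- `Diag^σ T`. -/
def DiagS {k n : ℕ} (σ : Equiv.Perm (Fin k)) (T : Tens k n) : Tens2 k n :=
  fun i j => if ∀ s : Fin k, i s = j (σ s) then T i else 0

/-- Action of a `2k`-tensor on `k` matrices. -/
def app2 {k n : ℕ} (S : Tens2 k n) (H : Fin k → Mat n) : ℝ :=
  ∑ p : Fin k → Fin n, ∑ q : Fin k → Fin n, S p q * ∏ s : Fin k, H s (p s) (q s)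

/-- Conjugation of a `2k`-tensor by an orthogonal matrix. -/
def conj2 {k n : ℕ} (V : Mat n) (S : Tens2 k n) : Tens2 k n :=
  fun i j => ∑ p : Fin k → Fin n, ∑ q : Fin k → Fin n,
    S p q * (∏ s : Fin k, V (i s) (p s)) * ∏ s : Fin k, V (j s) (q s)

/-- An `n × n` matrix regarded as a `2`-tensor on `ℝ^n`. -/
def matTens {n : ℕ} (A : Mat n) : Tens 2 n := fun i => A (i 0) (i 1)

/-! Conjugating a tensor by `V` is adjoint to the congruence `H ↦ Vᵀ H V` of its matrix
arguments, so the left side is `Diag^{(12)} A` evaluated at `Vᵀ H₁ V` and `Vᵀ H₂ V`, namely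
`∑ A_ef (Vᵀ H₁ V)_ef (Vᵀ H₂ V)_fe`. Cyclicity of the trace turns the right side into the same sum. -/

lemma Fintype.prod_sum_sum {ι κ M : Type*} [Fintype ι] [DecidableEq ι] [Fintype κ]
    [CommSemiring M] (f : ι → κ → κ → M) :
    ∏ s, ∑ a, ∑ b, f s a b = ∑ i : ι → κ, ∑ j : ι → κ, ∏ s, f s (i s) (j s) := by
  rw [Fintype.prod_sum]
  exact Finset.sum_congr rfl fun i _ => Fintype.prod_sum _

lemma Fintype.sum_sum_comm_pairs {α β M : Type*} [Fintype α] [Fintype β] [AddCommMonoid M]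
    (f : α → α → β → β → M) :
    ∑ i, ∑ j, ∑ p, ∑ q, f i j p q = ∑ p, ∑ q, ∑ i, ∑ j, f i j p q := by
  calc ∑ i, ∑ j, ∑ p, ∑ q, f i j p q = ∑ ij : α × α, ∑ pq : β × β, f ij.1 ij.2 pq.1 pq.2 := by
        simp only [Fintype.sum_prod_type]
    _ = ∑ pq : β × β, ∑ ij : α × α, f ij.1 ij.2 pq.1 pq.2 := Finset.sum_comm
    _ = _ := by simp only [Fintype.sum_prod_type]

lemma Fintype.sum_fin_two_arrow {α M : Type*} [Fintype α] [AddCommMonoid M]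
    (f : (Fin 2 → α) → M) : ∑ p, f p = ∑ a, ∑ b, f ![a, b] := by
  rw [← (finTwoArrowEquiv α).symm.sum_comp, Fintype.sum_prod_type]
  rfl

lemma Matrix.transpose_mul_mul_apply {n R : Type*} [Fintype n] [CommSemiring R]
    (V H : Matrix n n R) (a b : n) :
    (Vᵀ * H * V) a b = ∑ c, ∑ d, V c a * H c d * V d b := by
  simp only [mul_apply, transpose_apply, Finset.sum_mul]
  exact Finset.sum_comm

lemma app2_conj2 {k n : ℕ} (V : Mat n) (S : Tens2 k n) (H : Fin k → Mat n) :
    app2 (conj2 V S) H = app2 S fun s => Vᵀ * H s * V := by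
  simp only [app2, conj2, Matrix.transpose_mul_mul_apply, Fintype.prod_sum_sum,
    Finset.prod_mul_distrib, Finset.mul_sum, Finset.sum_mul]
  rw [Fintype.sum_sum_comm_pairs]
  refine Finset.sum_congr rfl fun p _ => Finset.sum_congr rfl fun q _ =>
    Finset.sum_congr rfl fun i _ => Finset.sum_congr rfl fun j _ => ?_
  ring

lemma app2_diagS {k n : ℕ} (σ : Equiv.Perm (Fin k)) (T : Tens k n) (H : Fin k → Mat n) :
    app2 (DiagS σ T) H = ∑ p, T p * ∏ s, H s (p s) (p (σ.symm s)) := by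
  have hdiag (p q : Fin k → Fin n) : (∀ s, p s = q (σ s)) ↔ q = p ∘ σ.symm := by
    constructor
    · intro h
      funext t
      simpa using (h (σ.symm t)).symm
    · rintro rfl s
      simp
  simp only [app2, DiagS, hdiag, ite_mul, zero_mul, Finset.sum_ite_eq', Finset.mem_univ,
    if_true, Function.comp_apply]

lemma app2_diagS_swap_matTens {n : ℕ} (A : Mat n) (H : Fin 2 → Mat n) :
    app2 (DiagS (Equiv.swap 0 1) (matTens A)) H = ∑ e, ∑ f, A e f * (H 0 e f * H 1 f e) := by
  simp [app2_diagS, Fintype.sum_fin_two_arrow, matTens, Fin.prod_univ_two]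

lemma Matrix.trace_mul_conj_mul {n R : Type*} [Fintype n] [CommSemiring R]
    (V M H : Matrix n n R) : trace (V * M * Vᵀ * H) = trace (M * (Vᵀ * H * V)) := by
  rw [Matrix.mul_assoc, Matrix.mul_assoc, Matrix.trace_mul_comm]
  simp only [Matrix.mul_assoc]

theorem statement10_general {n : ℕ} (A : Mat n)
    (V : Mat n)
    (H₁ H₂ : Mat n) (hH₂ : H₂.IsSymm) :
    app2 (conj2 V (DiagS (Equiv.swap 0 1) (matTens A))) ![H₁, H₂] =
      Matrix.trace
        ((V * (Matrix.of fun i j => A i j * (Vᵀ * H₁ * V) i j) * Vᵀ) * H₂ᵀ) := by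
  rw [app2_conj2, app2_diagS_swap_matTens, hH₂.eq, Matrix.trace_mul_conj_mul]
  simp only [trace, diag, mul_apply (M := of _), of_apply, cons_val_zero, cons_val_one, mul_assoc]

/-- `(V (Diag^{(12)} A) Vᵀ)[H₁,H₂] = ⟨V (A ∘ (Vᵀ H₁ V)) Vᵀ, H₂⟩` for any matrix `A`,
orthogonal `V` and symmetric `H₁, H₂`. -/
theorem statement10 {n : ℕ} (A : Mat n)
    (V : Mat n) (hV1 : Vᵀ * V = 1) (hV2 : V * Vᵀ = 1)
    (H₁ H₂ : Mat n) (hH₁ : H₁.IsSymm) (hH₂ : H₂.IsSymm) :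
    app2 (conj2 V (DiagS (Equiv.swap 0 1) (matTens A))) ![H₁, H₂] =
      Matrix.trace
        ((V * (Matrix.of fun i j => A i j * (Vᵀ * H₁ * V) i j) * Vᵀ) * H₂ᵀ) :=
  statement10_general A V H₁ H₂ hH₂
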